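/- For a jointly convex GNEP with regularized Nikaido–Isoda function ψ_a and its value function V_a(x) = max_{y∈X} ψ_a(x,y): a point x* ∈ X satisfies x* = y^a(x*) (i.e., x* is the unique maximizer of ψ_a(x*,·) over X) if and only if V_a(x*) = 0, if and only if x* is a normalized Nash equilibrium; moreover V_a(x) ≥ 0 for all x ∈ X. -/

import Mathlib

/-- Polar of a set in a real inner product space. -/
def polarSet {E : Type*} [NormedAddCommGroup E] [InnerProductSpace ℝ E] (S : Set E) : Set E :=
  {v | ∀ z ∈ S, (inner ℝ v z : ℝ) ≤ 0}

/-- Normal cone to a set `X` at a point `x`. -/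
def normalCone {E : Type*} [NormedAddCommGroup E] [InnerProductSpace ℝ E]
    (X : Set E) (x : E) : Set E :=
  {v | ∀ z ∈ X, (inner ℝ v (z - x) : ℝ) ≤ 0}

/-- Tangent cone: polar of the normal cone. -/
def tangentConeSet {E : Type*} [NormedAddCommGroup E] [InnerProductSpace ℝ E]
    (X : Set E) (x : E) : Set E :=
  polarSet (normalCone X x)

/-- The regularized Nikaido–Isoda function of a GNEP with loss functions `θ i`:
`ψ_a(x,y) = Σ_i [θ_i(x) − θ_i(x_{-i},y_i) − (a/2)‖x_i − y_i‖²]`. -/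
noncomputable def psiReg {N : ℕ} {d : Fin N → ℕ}
    (θ : Fin N → (PiLp 2 fun i => EuclideanSpace ℝ (Fin (d i))) → ℝ) (a : ℝ)
    (x y : PiLp 2 fun i => EuclideanSpace ℝ (Fin (d i))) : ℝ :=
  ∑ i, (θ i x - θ i (WithLp.toLp 2 (Function.update (WithLp.ofLp x) i (y i))) - a / 2 * ‖x i - y i‖ ^ 2)

/-- The VI operator `F(x) = (∇_{x_i} θ_i(x))_i` of a jointly convex GNEP. -/
noncomputable def gnepF {N : ℕ} {d : Fin N → ℕ}
    (θ : Fin N → (PiLp 2 fun i => EuclideanSpace ℝ (Fin (d i))) → ℝ)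
    (x : PiLp 2 fun i => EuclideanSpace ℝ (Fin (d i))) :
    PiLp 2 fun i => EuclideanSpace ℝ (Fin (d i)) :=
  WithLp.toLp 2 fun i => gradient (fun zi => θ i (WithLp.toLp 2 (Function.update (WithLp.ofLp x) i zi))) (x i)

/-!
Write `ψ_a(x, y) = Φₓ(x) − Φₓ(y) − (a/2)‖x − y‖²` with `Φₓ(y) = Σᵢ θᵢ(x₋ᵢ, yᵢ)`, a convex
function of `y` whose gradient at `y = x` is `F(x)`. Since `ψ_a(x, x) = 0`, `V_a ≥ 0`, and
`V_a(x) = 0` exactly when `x` maximizes `ψ_a(x, ·)` over `X`, i.e. minimizes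
`Φₓ + (a/2)‖x − ·‖²` over `X`. The quadratic term has zero gradient at `x`, so first-order
optimality gives the variational inequality; conversely the gradient inequality for the convex
`Φₓ` turns the variational inequality into `ψ_a(x, ·) ≤ 0`.
-/

open Set InnerProductSpace

section FirstOrder

variable {F : Type*} [NormedAddCommGroup F] [InnerProductSpace ℝ F] [CompleteSpace F]
  {f : F → ℝ} {g x : F}

theorem ConvexOn.add_inner_sub_le {S : Set F} (hf : ConvexOn ℝ S f) (hg : HasGradientAt f g x)
    (hx : x ∈ S) {y : F} (hy : y ∈ S) : f x + ⟪g, y - x⟫_ℝ ≤ f y := by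
  have hline : HasDerivAt (f ∘ (AffineMap.lineMap x y : ℝ → F)) ⟪g, y - x⟫_ℝ 0 := by
    simpa using hg.hasFDerivAt.comp_hasDerivAt_of_eq (0 : ℝ) AffineMap.hasDerivAt_lineMap
      (AffineMap.lineMap_apply_zero x y).symm
  have := (hf.comp_affineMap (AffineMap.lineMap x y)).le_slope_of_hasDerivAt
    (by simpa using hx) (by simpa using hy) zero_lt_one hline
  simp only [slope_def_field, Function.comp_apply, AffineMap.lineMap_apply_one,
    AffineMap.lineMap_apply_zero, sub_zero, div_one] at this
  linarith

theorem IsLocalMinOn.inner_gradient_nonneg {X : Set F} (hX : Convex ℝ X) (hx : x ∈ X)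
    (hmin : IsLocalMinOn f X x) (hg : HasGradientAt f g x) {z : F} (hz : z ∈ X) :
    0 ≤ ⟪g, z - x⟫_ℝ := by
  have hcone : z - x ∈ posTangentConeAt X x :=
    sub_mem_posTangentConeAt_of_segment_subset (hX.segment_subset hx hz)
  simpa using hmin.hasFDerivWithinAt_nonneg hg.hasFDerivAt.hasFDerivWithinAt hcone

theorem hasGradientAt_add_norm_sub_sq (hg : HasGradientAt f g x) (c : ℝ) :
    HasGradientAt (fun z => f z + c * ‖x - z‖ ^ 2) g x := by
  rw [hasGradientAt_iff_hasFDerivAt] at hg ⊢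
  have hsq : HasFDerivAt (fun z => c * ‖x - z‖ ^ 2) (0 : F →L[ℝ] ℝ) x := by
    simpa using (((hasFDerivAt_id x).const_sub x).norm_sq).const_mul c
  exact (hg.add hsq).congr_fderiv (add_zero _)

theorem forall_sub_sub_norm_sq_nonpos_iff {X : Set F} (hX : Convex ℝ X) (hx : x ∈ X)
    (hf : ConvexOn ℝ univ f) (hg : HasGradientAt f g x) {c : ℝ} (hc : 0 ≤ c) :
    (∀ z ∈ X, f x - f z - c * ‖x - z‖ ^ 2 ≤ 0) ↔ ∀ z ∈ X, 0 ≤ ⟪g, z - x⟫_ℝ := by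
  constructor
  · intro h z hz
    have hmin : IsMinOn (fun z => f z + c * ‖x - z‖ ^ 2) X x := fun w hw => by
      simpa [sub_nonpos, add_comm] using h w hw
    exact hmin.localize.inner_gradient_nonneg hX hx (hasGradientAt_add_norm_sub_sq hg c) hz
  · intro h z hz
    have := hf.add_inner_sub_le hg (mem_univ x) (mem_univ z)
    nlinarith [h z hz, norm_nonneg (x - z)]

end FirstOrder

section GNEP

variable {N : ℕ} {d : Fin N → ℕ} (θ : Fin N → (PiLp 2 fun i => EuclideanSpace ℝ (Fin (d i))) → ℝ)

noncomputable def deviationSum (x y : PiLp 2 fun i => EuclideanSpace ℝ (Fin (d i))) : ℝ :=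
  ∑ i, θ i (WithLp.toLp 2 (Function.update (WithLp.ofLp x) i (y i)))

theorem deviationSum_self (x : PiLp 2 fun i => EuclideanSpace ℝ (Fin (d i))) :
    deviationSum θ x x = ∑ i, θ i x := by
  simp [deviationSum]

theorem psiReg_eq_deviationSum (a : ℝ) (x y : PiLp 2 fun i => EuclideanSpace ℝ (Fin (d i))) :
    psiReg θ a x y = deviationSum θ x x - deviationSum θ x y - a / 2 * ‖x - y‖ ^ 2 := by
  rw [deviationSum_self, PiLp.norm_sq_eq_of_L2 _ (x - y)]
  simp only [psiReg, deviationSum, PiLp.sub_apply, Finset.mul_sum, Finset.sum_sub_distrib]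

theorem psiReg_self (a : ℝ) (x : PiLp 2 fun i => EuclideanSpace ℝ (Fin (d i))) :
    psiReg θ a x x = 0 := by
  simp [psiReg_eq_deviationSum]

theorem convexOn_deviationSum
    (hθconv : ∀ i x, ConvexOn ℝ univ fun zi : EuclideanSpace ℝ (Fin (d i)) =>
      θ i (WithLp.toLp 2 (Function.update (WithLp.ofLp (p := 2) x) i zi)))
    (x : PiLp 2 fun i => EuclideanSpace ℝ (Fin (d i))) :
    ConvexOn ℝ univ (deviationSum θ x) := by
  have hterm : ∀ i, ConvexOn ℝ univ fun y : PiLp 2 (fun i => EuclideanSpace ℝ (Fin (d i))) =>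
      θ i (WithLp.toLp 2 (Function.update (WithLp.ofLp x) i (y i))) := fun i =>
    (hθconv i x).comp_linearMap (PiLp.projₗ (𝕜 := ℝ) 2 (fun i => EuclideanSpace ℝ (Fin (d i))) i)
  have hsum : deviationSum θ x = ∑ i, fun y : PiLp 2 (fun i => EuclideanSpace ℝ (Fin (d i))) =>
      θ i (WithLp.toLp 2 (Function.update (WithLp.ofLp x) i (y i))) := by
    ext y
    simp [deviationSum]
  rw [hsum]
  exact Finset.sum_induction _ (ConvexOn ℝ univ) (fun _ _ => ConvexOn.add)
    (convexOn_const 0 convex_univ) fun i _ => hterm i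

theorem hasGradientAt_gnepF_apply (hθ : ∀ i, Differentiable ℝ (θ i)) (i : Fin N)
    (x : PiLp 2 fun i => EuclideanSpace ℝ (Fin (d i))) :
    HasGradientAt (fun zi => θ i (WithLp.toLp 2 (Function.update (WithLp.ofLp x) i zi)))
      (gnepF θ x i) (x i) :=
  ((hθ i).comp ((PiLp.contDiff_toLp.comp (contDiff_update 1 _ i)).differentiable one_ne_zero)
    (x i)).hasGradientAt

theorem hasGradientAt_deviationSum (hθ : ∀ i, Differentiable ℝ (θ i))
    (x : PiLp 2 fun i => EuclideanSpace ℝ (Fin (d i))) :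
    HasGradientAt (deviationSum θ x) (gnepF θ x) x := by
  have hsum := HasFDerivAt.fun_sum (u := Finset.univ) fun i _ =>
    (hasGradientAt_gnepF_apply θ hθ i x).hasFDerivAt.comp x
      (PiLp.proj (𝕜 := ℝ) 2 (fun i => EuclideanSpace ℝ (Fin (d i))) i).hasFDerivAt
  rw [hasGradientAt_iff_hasFDerivAt]
  refine hsum.congr_fderiv ?_
  ext v
  simp [PiLp.inner_apply]

theorem forall_psiReg_nonpos_iff {X : Set (PiLp 2 fun i => EuclideanSpace ℝ (Fin (d i)))}
    (hX : Convex ℝ X) (hθ : ∀ i, Differentiable ℝ (θ i))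
    (hθconv : ∀ i x, ConvexOn ℝ univ fun zi : EuclideanSpace ℝ (Fin (d i)) =>
      θ i (WithLp.toLp 2 (Function.update (WithLp.ofLp (p := 2) x) i zi)))
    {a : ℝ} (ha : 0 ≤ a) {x : PiLp 2 fun i => EuclideanSpace ℝ (Fin (d i))} (hx : x ∈ X) :
    (∀ z ∈ X, psiReg θ a x z ≤ 0) ↔ ∀ z ∈ X, 0 ≤ ⟪gnepF θ x, z - x⟫_ℝ := by
  simpa only [psiReg_eq_deviationSum] using
    forall_sub_sub_norm_sq_nonpos_iff hX hx (convexOn_deviationSum θ hθconv x)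
      (hasGradientAt_deviationSum θ hθ x) (div_nonneg ha zero_le_two)

end GNEP

theorem isMaxOn_iff_eq_of_isMaxOn {α β : Type*} [PartialOrder β] {f : α → β} {s : Set α}
    {x y : α} (hx : x ∈ s) (hy : y ∈ s) (hmax : IsMaxOn f s y) : IsMaxOn f s x ↔ f y = f x :=
  ⟨fun h => le_antisymm (h hy) (hmax hx), fun h _ hz => h ▸ hmax hz⟩

theorem stmt18_general {N : ℕ} {d : Fin N → ℕ}
    (X : Set (PiLp 2 fun i => EuclideanSpace ℝ (Fin (d i))))
    (hXconv : Convex ℝ X)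
    (θ : Fin N → (PiLp 2 fun i => EuclideanSpace ℝ (Fin (d i))) → ℝ)
    (hθdiff : ∀ i, ContDiff ℝ 1 (θ i))
    (hθconv : ∀ i x, ConvexOn ℝ Set.univ
      (fun zi : EuclideanSpace ℝ (Fin (d i)) => θ i (WithLp.toLp 2 (Function.update (WithLp.ofLp (p := 2) x) i zi))))
    (a : ℝ) (ha : 0 < a)
    (Va : (PiLp 2 fun i => EuclideanSpace ℝ (Fin (d i))) → ℝ)
    (hVa : ∀ x ∈ X, ∃ y ∈ X, (∀ z ∈ X, psiReg θ a x z ≤ psiReg θ a x y) ∧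
      Va x = psiReg θ a x y) :
    (∀ x ∈ X, 0 ≤ Va x) ∧
      ∀ xs ∈ X,
        ((∀ z ∈ X, psiReg θ a xs z ≤ psiReg θ a xs xs) ↔ Va xs = 0) ∧
        (Va xs = 0 ↔ ∀ y ∈ X, 0 ≤ (inner ℝ (gnepF θ xs) (y - xs) : ℝ)) := by
  have hVa_self : ∀ x ∈ X, (IsMaxOn (psiReg θ a x) X x ↔ Va x = 0) := fun x hx => by
    obtain ⟨y, hy, hmax, hVy⟩ := hVa x hx
    rw [hVy, ← psiReg_self θ a x]
    exact isMaxOn_iff_eq_of_isMaxOn hx hy hmax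
  refine ⟨fun x hx => ?_, fun xs hxs => ⟨hVa_self xs hxs, (hVa_self xs hxs).symm.trans ?_⟩⟩
  · obtain ⟨y, hy, hmax, hVy⟩ := hVa x hx
    exact hVy ▸ psiReg_self θ a x ▸ hmax x hx
  · simpa only [isMaxOn_iff, psiReg_self] using
      forall_psiReg_nonpos_iff θ hXconv (fun i => (hθdiff i).differentiable one_ne_zero) hθconv
        ha.le hxs

theorem stmt18 {N : ℕ} {d : Fin N → ℕ}
    (X : Set (PiLp 2 fun i => EuclideanSpace ℝ (Fin (d i))))
    (hXne : X.Nonempty) (hXcl : IsClosed X) (hXconv : Convex ℝ X)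
    (θ : Fin N → (PiLp 2 fun i => EuclideanSpace ℝ (Fin (d i))) → ℝ)
    (hθdiff : ∀ i, ContDiff ℝ 1 (θ i))
    (hθconv : ∀ i x, ConvexOn ℝ Set.univ
      (fun zi : EuclideanSpace ℝ (Fin (d i)) => θ i (WithLp.toLp 2 (Function.update (WithLp.ofLp (p := 2) x) i zi))))
    (a : ℝ) (ha : 0 < a)
    (Va : (PiLp 2 fun i => EuclideanSpace ℝ (Fin (d i))) → ℝ)
    (hVa : ∀ x ∈ X, ∃ y ∈ X, (∀ z ∈ X, psiReg θ a x z ≤ psiReg θ a x y) ∧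
      Va x = psiReg θ a x y) :
    (∀ x ∈ X, 0 ≤ Va x) ∧
      ∀ xs ∈ X,
        ((∀ z ∈ X, psiReg θ a xs z ≤ psiReg θ a xs xs) ↔ Va xs = 0) ∧
        (Va xs = 0 ↔ ∀ y ∈ X, 0 ≤ (inner ℝ (gnepF θ xs) (y - xs) : ℝ)) :=
  stmt18_general X hXconv θ hθdiff hθconv a ha Va hVa
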